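/- Let A be a continuous linear equivalence of ℋ = ℝ × H that preserves the Lorentz form, and let e ∈ H be a unit vector. Then there exist ε ∈ {1, −1}, surjective linear isometries Q and Q' of H, and a real α ≥ 0 such that A = P' ∘ R ∘ P, where P'(s,x) = (ε·s, Q' x), P(s,x) = (s, Q* x), and R(s,x) = (s·cosh α + ⟪e,x⟫·sinh α, (s·sinh α + (cosh α − 1)·⟪e,x⟫)·e + x). -/

import Mathlib

open scoped RealInnerProductSpace

noncomputable section

variable {H : Type*} [NormedAddCommGroup H] [InnerProductSpace ℝ H]

/-- The Lorentz form on `ℝ × H`: `⟨(s,x),(t,y)⟩_L = ⟪x,y⟫ - s·t`. -/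
def lorentzInner (z w : ℝ × H) : ℝ := ⟪z.2, w.2⟫ - z.1 * w.1

/-!
Lorentz-preserving maps are closed under composition and inversion. The vector `z = A⁻¹ (1, 0)`
satisfies `⟨z, z⟩_L = -1`, so a rotation `P` of the spatial part followed by a boost `R` of
rapidity `arsinh ‖z.2‖` along `e` sends it to `ε (1, 0)` with `ε = ±1`. Then `C = A ∘ (R ∘ P)⁻¹`
is Lorentz-preserving with `C (1, 0) = (ε, 0)`; Lorentz-orthogonality to `(1, 0)` forces `C (0, x)`
to be purely spatial, so `C (s, x) = (ε s, Q' x)` for a surjective linear isometry `Q'`, and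
`A = C ∘ R ∘ P`.
-/

open Real

def PreservesLorentz (A : ℝ × H → ℝ × H) : Prop :=
  ∀ z w, lorentzInner (A z) (A w) = lorentzInner z w

theorem PreservesLorentz.trans {A B : (ℝ × H) ≃L[ℝ] (ℝ × H)} (hA : PreservesLorentz A)
    (hB : PreservesLorentz B) : PreservesLorentz (A.trans B) :=
  fun z w => (hB (A z) (A w)).trans (hA z w)

theorem PreservesLorentz.symm {A : (ℝ × H) ≃L[ℝ] (ℝ × H)} (hA : PreservesLorentz A) :
    PreservesLorentz A.symm := fun z w => by
  rw [← hA, A.apply_symm_apply, A.apply_symm_apply]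

theorem lorentzInner_self (z : ℝ × H) : lorentzInner z z = ‖z.2‖ ^ 2 - z.1 ^ 2 := by
  rw [lorentzInner, real_inner_self_eq_norm_sq]; ring

def spatialRotation (Q : H ≃ₗᵢ[ℝ] H) : (ℝ × H) ≃L[ℝ] (ℝ × H) :=
  (ContinuousLinearEquiv.refl ℝ ℝ).prodCongr Q.toContinuousLinearEquiv

@[simp]
theorem spatialRotation_apply (Q : H ≃ₗᵢ[ℝ] H) (s : ℝ) (x : H) :
    spatialRotation Q (s, x) = (s, Q x) := rfl

theorem preservesLorentz_spatialRotation (Q : H ≃ₗᵢ[ℝ] H) :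
    PreservesLorentz (spatialRotation Q) := fun z w => by
  simp [lorentzInner, spatialRotation]

def boostCLM (e : H) (α : ℝ) : (ℝ × H) →L[ℝ] (ℝ × H) :=
  (cosh α • ContinuousLinearMap.fst ℝ ℝ H +
      sinh α • (innerSL ℝ e).comp (ContinuousLinearMap.snd ℝ ℝ H)).prod
    ((sinh α • ContinuousLinearMap.fst ℝ ℝ H +
        (cosh α - 1) • (innerSL ℝ e).comp (ContinuousLinearMap.snd ℝ ℝ H)).smulRight e +
      ContinuousLinearMap.snd ℝ ℝ H)

@[simp]
theorem boostCLM_apply (e : H) (α s : ℝ) (x : H) :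
    boostCLM e α (s, x) =
      (s * cosh α + ⟪e, x⟫ * sinh α, (s * sinh α + (cosh α - 1) * ⟪e, x⟫) • e + x) := by
  simp [boostCLM, mul_comm]

theorem boostCLM_boostCLM_neg {e : H} (he : ‖e‖ = 1) (α : ℝ) (z : ℝ × H) :
    boostCLM e α (boostCLM e (-α) z) = z := by
  obtain ⟨s, x⟩ := z
  have hee : ⟪e, e⟫ = 1 := inner_self_eq_one_of_norm_eq_one he
  simp only [boostCLM_apply, cosh_neg, sinh_neg, inner_add_right, real_inner_smul_right, hee,
    Prod.mk.injEq]
  constructor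
  · linear_combination s * cosh_sq α
  · match_scalars
    · linear_combination ⟪e, x⟫ * cosh_sq α
    · rfl

def boost {e : H} (he : ‖e‖ = 1) (α : ℝ) : (ℝ × H) ≃L[ℝ] (ℝ × H) :=
  .equivOfInverse (boostCLM e α) (boostCLM e (-α))
    (fun z => by simpa using boostCLM_boostCLM_neg he (-α) z) (boostCLM_boostCLM_neg he α)

@[simp]
theorem boost_apply {e : H} (he : ‖e‖ = 1) (α s : ℝ) (x : H) :
    boost he α (s, x) =
      (s * cosh α + ⟪e, x⟫ * sinh α, (s * sinh α + (cosh α - 1) * ⟪e, x⟫) • e + x) :=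
  boostCLM_apply e α s x

theorem preservesLorentz_boost {e : H} (he : ‖e‖ = 1) (α : ℝ) :
    PreservesLorentz (boost he α) := by
  rintro ⟨s, x⟩ ⟨t, y⟩
  have hee : ⟪e, e⟫ = 1 := inner_self_eq_one_of_norm_eq_one he
  simp only [boost_apply, lorentzInner, inner_add_left, inner_add_right, real_inner_smul_left,
    real_inner_smul_right, hee, real_inner_comm e x]
  linear_combination (⟪e, x⟫ * ⟪e, y⟫ - s * t) * cosh_sq α

theorem PreservesLorentz.exists_surjective_linearIsometry_of_apply_one_zero
    {C : (ℝ × H) ≃L[ℝ] (ℝ × H)} (hC : PreservesLorentz C) {ε : ℝ} (hCε : C (1, 0) = (ε, 0)) :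
    ∃ W : H →ₗᵢ[ℝ] H, Function.Surjective W ∧ ∀ s x, C (s, x) = (ε * s, W x) := by
  have hε : ε ≠ 0 := by
    rintro rfl
    simpa [lorentzInner, hCε] using hC (1, 0) (1, 0)
  let W : H →L[ℝ] H :=
    (ContinuousLinearMap.snd ℝ ℝ H).comp ((C : (ℝ × H) →L[ℝ] (ℝ × H)).comp
      (ContinuousLinearMap.inr ℝ ℝ H))
  have hW : ∀ x, C (0, x) = (0, W x) := fun x => by
    refine Prod.ext ?_ rfl
    simpa [lorentzInner, hCε, hε] using hC (1, 0) (0, x)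
  have hCW : ∀ s x, C (s, x) = (ε * s, W x) := fun s x => by
    have hsx : ((s, x) : ℝ × H) = s • ((1 : ℝ), (0 : H)) + (0, x) := by simp
    rw [hsx, map_add, map_smul, hCε, hW]
    simp [mul_comm]
  refine ⟨W.toLinearMap.isometryOfInner fun x y => ?_, fun y => ?_, hCW⟩
  · simpa [lorentzInner, hW] using hC (0, x) (0, y)
  · obtain ⟨⟨t, x⟩, hx⟩ := C.surjective (0, y)
    rw [hCW] at hx
    exact ⟨x, congrArg Prod.snd hx⟩

theorem exists_norm_eq_one_smul_eq {e : H} (he : ‖e‖ = 1) (y : H) :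
    ∃ u : H, ‖u‖ = 1 ∧ ‖y‖ • u = y := by
  rcases eq_or_ne y 0 with rfl | hy
  · exact ⟨e, he, by simp⟩
  · exact ⟨‖y‖⁻¹ • y, norm_smul_inv_norm hy, by simp [smul_smul, hy]⟩

theorem exists_boost_spatialRotation_apply_eq {e : H} (he : ‖e‖ = 1) (z : ℝ × H)
    (hz : lorentzInner z z = -1) :
    ∃ (ε : ℝ) (Q : H ≃ₗᵢ[ℝ] H) (α : ℝ), (ε = 1 ∨ ε = -1) ∧ 0 ≤ α ∧
      boost he α (spatialRotation Q z) = (ε, 0) := by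
  obtain ⟨t, y⟩ := z
  set α := arsinh ‖y‖
  have hsinh : sinh α = ‖y‖ := sinh_arsinh _
  obtain ⟨ε, hε, ht⟩ : ∃ ε : ℝ, (ε = 1 ∨ ε = -1) ∧ t = ε * cosh α := by
    have : t ^ 2 = cosh α ^ 2 := by
      rw [lorentzInner_self] at hz
      rw [cosh_sq, hsinh]
      linarith
    rcases sq_eq_sq_iff_eq_or_eq_neg.1 this with h | h
    · exact ⟨1, .inl rfl, by rw [h, one_mul]⟩
    · exact ⟨-1, .inr rfl, by rw [h, neg_one_mul]⟩
  obtain ⟨u, hu, hyu⟩ := exists_norm_eq_one_smul_eq he y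
  have hnorm : ‖u‖ = ‖-(ε • e)‖ := by rcases hε with rfl | rfl <;> simp [hu, he]
  let Q : H ≃ₗᵢ[ℝ] H := Submodule.reflection (ℝ ∙ (u - -(ε • e)))ᗮ
  have hQy : Q y = -(ε * sinh α) • e := by
    rw [← hyu, map_smul, Submodule.reflection_sub hnorm, hsinh]
    module
  have hee : ⟪e, e⟫ = 1 := inner_self_eq_one_of_norm_eq_one he
  refine ⟨ε, Q, α, hε, arsinh_nonneg_iff.2 (norm_nonneg y), ?_⟩
  simp only [spatialRotation_apply, hQy, boost_apply, real_inner_smul_right, hee, ht,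
    Prod.mk.injEq]
  constructor
  · linear_combination ε * cosh_sq α
  · match_scalars
    ring

/-- Every continuous linear equivalence of `ℝ × H` preserving the Lorentz form can be written
as `P' ∘ R ∘ P` where `P' (s,x) = (ε·s, Q' x)` with `ε = ±1`, `P (s,x) = (s, Q* x)`, with
`Q, Q'` surjective linear isometries of `H`, and `R` is the standard boost of parameter
`α ≥ 0` in the direction of the unit vector `e`. -/
theorem lorentz_eq_rotation_boost_rotation [CompleteSpace H]
    (A : (ℝ × H) ≃L[ℝ] (ℝ × H))
    (hA : ∀ z w : ℝ × H, lorentzInner (A z) (A w) = lorentzInner z w)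
    (e : H) (he : ‖e‖ = 1) :
    ∃ (ε : ℝ) (Q Q' : H →ₗᵢ[ℝ] H) (α : ℝ),
      (ε = 1 ∨ ε = -1) ∧ Function.Surjective Q ∧ Function.Surjective Q' ∧ 0 ≤ α ∧
      ∀ (s : ℝ) (x : H),
        A (s, x) =
          (ε * (s * Real.cosh α +
              ⟪e, ContinuousLinearMap.adjoint Q.toContinuousLinearMap x⟫ * Real.sinh α),
           Q' ((s * Real.sinh α +
                (Real.cosh α - 1) * ⟪e, ContinuousLinearMap.adjoint Q.toContinuousLinearMap x⟫) • e
              + ContinuousLinearMap.adjoint Q.toContinuousLinearMap x)) := by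
  replace hA : PreservesLorentz A := hA
  obtain ⟨ε, Q, α, hε, hα, hQα⟩ :=
    exists_boost_spatialRotation_apply_eq he (A.symm (1, 0)) (by rw [hA.symm]; simp [lorentzInner])
  let RP := (spatialRotation Q).trans (boost he α)
  have hRP : PreservesLorentz RP :=
    (preservesLorentz_spatialRotation Q).trans (preservesLorentz_boost he α)
  have hRP1 : RP.symm (1, 0) = ε • A.symm (1, 0) := by
    rw [RP.symm_apply_eq, map_smul]
    change _ = ε • boost he α (spatialRotation Q _)
    rw [hQα]
    rcases hε with rfl | rfl <;> simp
  obtain ⟨Q', hQ', hC⟩ :=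
    (hRP.symm.trans hA).exists_surjective_linearIsometry_of_apply_one_zero (ε := ε)
      (by simp [hRP1])
  refine ⟨ε, Q.symm.toLinearIsometry, Q', α, hε, Q.symm.surjective, hQ', hα, fun s x => ?_⟩
  have hadj : ContinuousLinearMap.adjoint Q.symm.toLinearIsometry.toContinuousLinearMap = Q :=
    Q.symm.adjoint_eq_symm
  calc A (s, x) = (RP.symm.trans A) (boost he α (s, Q x)) :=
        congrArg A (RP.symm_apply_apply (s, x)).symm
    _ = _ := by rw [hC, boost_apply, hadj]; rfl
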